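/- Let Λ be a left cancellative small category, let M be a conical atomic monoid, let d : Λ → M be a length function satisfying (LF1) and (LF2), let B be a transversal of generators of the maximal proper principal right ideals of Λ, and suppose Λ satisfies the R-condition. Then every morphism of Λ has a unique representation as an element of B*Λ⁻¹: for every α ∈ Λ there exist β ∈ B* and g ∈ Λ⁻¹ with α = βg, and if β₁g₁ = β₂g₂ with β₁, β₂ ∈ B* and g₁, g₂ ∈ Λ⁻¹, then β₁ = β₂ and g₁ = g₂. -/

import Mathlib

/-- A left cancellative small category (LCSC), presented as a set of morphisms
with source and range maps and a (total, but only meaningful on composable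
pairs) composition. Identities are the morphisms of the form `src a` / `ran a`. -/
structure LCSC where
  Mor : Type
  src : Mor → Mor
  ran : Mor → Mor
  comp : Mor → Mor → Mor
  src_src : ∀ a, src (src a) = src a
  ran_src : ∀ a, ran (src a) = src a
  src_ran : ∀ a, src (ran a) = ran a
  ran_ran : ∀ a, ran (ran a) = ran a
  comp_src : ∀ a, comp a (src a) = a
  id_comp : ∀ a, comp (ran a) a = a
  src_comp : ∀ a b, src a = ran b → src (comp a b) = src b
  ran_comp : ∀ a b, src a = ran b → ran (comp a b) = ran a
  assoc : ∀ a b c, src a = ran b → src b = ran c →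
      comp (comp a b) c = comp a (comp b c)
  leftCancel : ∀ a b c, src a = ran b → src a = ran c →
      comp a b = comp a c → b = c

namespace LCSC

variable (C : LCSC)

/-- `v` is an identity morphism (an object of `Λ⁰`). -/
def IsId (v : C.Mor) : Prop := C.src v = v ∧ C.ran v = v

/-- `a ∈ Λ⁻¹`, i.e. `a` is invertible. -/
def IsInvertible (a : C.Mor) : Prop :=
  ∃ b, C.src a = C.ran b ∧ C.src b = C.ran a ∧
    C.comp a b = C.ran a ∧ C.comp b a = C.src a

/-- The principal right ideal `aΛ`. -/
def Ideal (a : C.Mor) : Set C.Mor :=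
  {x | ∃ c, C.src a = C.ran c ∧ x = C.comp a c}

/-- `a ≤ b` iff `b ∈ aΛ`, i.e. `a` is an initial segment of `b`. -/
def le (a b : C.Mor) : Prop := b ∈ C.Ideal a

end LCSC
/-- `d : Λ → M` is a length function into the monoid `M`. -/
def LCSC.MLenFn (C : LCSC) {M : Type} [Monoid M] (d : C.Mor → M) : Prop :=
  ∀ a b, C.src a = C.ran b → d (C.comp a b) = d a * d b

/-- (LF1): `d⁻¹(1) = Λ⁻¹`. -/
def LCSC.LF1 (C : LCSC) {M : Type} [Monoid M] (d : C.Mor → M) : Prop :=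
  ∀ a, d a = 1 ↔ C.IsInvertible a

/-- (LF2): every factorization of `d(α)` in `M` lifts to a factorization of `α`. -/
def LCSC.LF2 (C : LCSC) {M : Type} [Monoid M] (d : C.Mor → M) : Prop :=
  ∀ a m₁ m₂, d a = m₁ * m₂ →
    ∃ a₁ a₂, C.src a₁ = C.ran a₂ ∧ a = C.comp a₁ a₂ ∧ d a₁ = m₁ ∧ d a₂ = m₂

/-- The monoid `M` is conical: `m₁m₂ = 1` implies `m₁ = m₂ = 1`. -/
def Conical (M : Type) [Monoid M] : Prop :=
  ∀ m₁ m₂ : M, m₁ * m₂ = 1 → m₁ = 1 ∧ m₂ = 1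

/-- `e ∈ M` is an atom: `e = m₁m₂` implies `m₁ = 1` or `m₂ = 1`. -/
def MAtom {M : Type} [Monoid M] (e : M) : Prop :=
  ∀ m₁ m₂ : M, e = m₁ * m₂ → m₁ = 1 ∨ m₂ = 1

/-- `M` is atomic: it is generated by its atoms. -/
def AtomicMonoid (M : Type) [Monoid M] : Prop :=
  ∀ m : M, m ∈ Submonoid.closure {e : M | MAtom e}

/-- `α ∈ Λ` is an atom: whenever `α = βγ`, then `β ∈ Λ⁻¹` or `γ ∈ Λ⁻¹`. -/
def LCSC.CAtom (C : LCSC) (a : C.Mor) : Prop :=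
  ∀ b c, C.src b = C.ran c → a = C.comp b c →
    C.IsInvertible b ∨ C.IsInvertible c

/-- `αΛ` is a maximal proper principal right ideal: it is properly contained in
`r(α)Λ` and maximal among principal right ideals properly contained in `r(α)Λ`. -/
def LCSC.MaxIdeal (C : LCSC) (a : C.Mor) : Prop :=
  C.Ideal a ⊂ C.Ideal (C.ran a) ∧
  ∀ b : C.Mor, C.Ideal a ⊆ C.Ideal b → C.Ideal b ⊂ C.Ideal (C.ran a) →
    C.Ideal b = C.Ideal a

/-- The subcategory `B*` of `Λ` generated by a set `B` of morphisms, together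
with the identities. -/
inductive GenSubcat (C : LCSC) (B : Set C.Mor) : C.Mor → Prop
  | id (v : C.Mor) : C.IsId v → GenSubcat C B v
  | of (b : C.Mor) : b ∈ B → GenSubcat C B b
  | comp (a b : C.Mor) : GenSubcat C B a → GenSubcat C B b →
      C.src a = C.ran b → GenSubcat C B (C.comp a b)

/-- `B` is a transversal of generators of the maximal proper principal right
ideals of `Λ`: a set of atoms containing exactly one generator of each maximal
proper principal right ideal. -/
def LCSC.IsTransversal (C : LCSC) (B : Set C.Mor) : Prop :=
  (∀ b ∈ B, C.CAtom b) ∧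
  ∀ a : C.Mor, C.MaxIdeal a → ∃! b, b ∈ B ∧ C.Ideal b = C.Ideal a

/-- `Λ` satisfies the R-condition (with respect to `B`): whenever `α = βg` with
`α, β ∈ B*` and `g ∈ Λ⁻¹`, then `g ∈ Λ⁰`. -/
def RCondition (C : LCSC) (B : Set C.Mor) : Prop :=
  ∀ a b g, GenSubcat C B a → GenSubcat C B b → C.IsInvertible g →
    C.src b = C.ran g → a = C.comp b g → C.IsId g

/-!
A morphism whose length is an atom of `M` is an atom of `Λ` by (LF1), so it is either invertible
or generates a maximal proper principal right ideal, hence equals `b g` with `b ∈ B` and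
`g ∈ Λ⁻¹`. Since `M` is generated by atoms, (LF2) splits an arbitrary morphism into such pieces;
each invertible leftover is pushed to the right into the next piece, which does not change the
length of that piece. Uniqueness: `β₁ g₁ = β₂ g₂` gives `β₂ = β₁ (g₁ g₂⁻¹)`, so the R-condition
forces `g₁ g₂⁻¹` to be an identity, whence `β₁ = β₂`, and left cancellation gives `g₁ = g₂`.
-/

namespace LCSC

variable {C : LCSC}

lemma isId_ran (a : C.Mor) : C.IsId (C.ran a) := ⟨C.src_ran a, C.ran_ran a⟩

lemma IsInvertible.comp {a b : C.Mor} (ha : C.IsInvertible a) (hb : C.IsInvertible b)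
    (h : C.src a = C.ran b) : C.IsInvertible (C.comp a b) := by
  obtain ⟨a', ha1, ha2, ha3, ha4⟩ := ha
  obtain ⟨b', hb1, hb2, hb3, hb4⟩ := hb
  have hraa : C.ran a' = C.ran b := ha1 ▸ h
  have hba : C.src b' = C.ran a' := hb2.trans hraa.symm
  refine ⟨C.comp b' a', ?_, ?_, ?_, ?_⟩
  · rw [C.src_comp a b h, C.ran_comp b' a' hba, hb1]
  · rw [C.src_comp b' a' hba, C.ran_comp a b h, ha2]
  · rw [C.ran_comp a b h, C.assoc a b (C.comp b' a') h (hb1.trans (C.ran_comp b' a' hba).symm),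
      ← C.assoc b b' a' hb1 hba, hb3, ← hraa, C.id_comp a', ha3]
  · rw [C.src_comp a b h, C.assoc b' a' (C.comp a b) hba (ha2.trans (C.ran_comp a b h).symm),
      ← C.assoc a' a b ha2 h, ha4, h, C.id_comp b, hb4]

lemma mem_ideal_self (a : C.Mor) : a ∈ C.Ideal a :=
  ⟨C.src a, (C.ran_src a).symm, (C.comp_src a).symm⟩

lemma mem_ideal_ran {x a : C.Mor} (h : C.ran x = C.ran a) : x ∈ C.Ideal (C.ran a) :=
  ⟨x, by rw [C.src_ran, h], by rw [← h, C.id_comp]⟩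

lemma ideal_subset_ideal_ran (a : C.Mor) : C.Ideal a ⊆ C.Ideal (C.ran a) := by
  rintro x ⟨c, hc, rfl⟩
  exact mem_ideal_ran (C.ran_comp a c hc)

lemma isInvertible_of_ran_mem_ideal {a : C.Mor} (h : C.ran a ∈ C.Ideal a) :
    C.IsInvertible a := by
  obtain ⟨c, hc, hrc⟩ := h
  have hsc : C.src c = C.ran a := by rw [← C.src_comp a c hc, ← hrc, C.src_ran]
  have hca : C.comp c a = C.src a := by
    apply C.leftCancel a (C.comp c a) (C.src a) (hc.trans (C.ran_comp c a hsc).symm)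
      (C.ran_src a).symm
    rw [← C.assoc a c a hc hsc, ← hrc, C.id_comp, C.comp_src]
  exact ⟨c, hc, hsc, hrc.symm, hca⟩

lemma ideal_ran_subset_of_isInvertible {a : C.Mor} (ha : C.IsInvertible a) :
    C.Ideal (C.ran a) ⊆ C.Ideal a := by
  obtain ⟨a', ha1, ha2, ha3, -⟩ := ha
  rintro x ⟨c, hc, rfl⟩
  rw [C.src_ran] at hc
  have hac : C.src a' = C.ran c := ha2.trans hc
  refine ⟨C.comp a' c, ha1.trans (C.ran_comp a' c hac).symm, ?_⟩
  rw [← C.assoc a a' c ha1 hac, ha3]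

lemma ideal_comp_of_isInvertible {b c : C.Mor} (hc : C.IsInvertible c)
    (h : C.src b = C.ran c) : C.Ideal (C.comp b c) = C.Ideal b := by
  obtain ⟨c', hc1, hc2, hc3, -⟩ := hc
  apply Set.Subset.antisymm
  · rintro x ⟨e, he, rfl⟩
    rw [C.src_comp b c h] at he
    exact ⟨C.comp c e, h.trans (C.ran_comp c e he).symm, C.assoc b c e h he⟩
  · rintro x ⟨e, he, rfl⟩
    have hce : C.src c' = C.ran e := hc2.trans (h.symm.trans he)
    refine ⟨C.comp c' e, (C.src_comp b c h).trans (hc1.trans (C.ran_comp c' e hce).symm), ?_⟩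
    rw [← C.assoc (C.comp b c) c' e ((C.src_comp b c h).trans hc1) hce,
      C.assoc b c c' h hc1, hc3, ← h, C.comp_src]

lemma CAtom.maxIdeal {a : C.Mor} (hatom : C.CAtom a) (hninv : ¬ C.IsInvertible a) :
    C.MaxIdeal a := by
  have hproper : ¬ C.Ideal (C.ran a) ⊆ C.Ideal a := fun hsub =>
    hninv (isInvertible_of_ran_mem_ideal (hsub (mem_ideal_ran (C.ran_ran a))))
  refine ⟨⟨ideal_subset_ideal_ran a, hproper⟩, fun b hab hbr => ?_⟩
  obtain ⟨c, hbc, hac⟩ := hab (mem_ideal_self a)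
  rcases hatom b c hbc hac with hb | hc
  · have hrb : C.ran b = C.ran a := by rw [hac, C.ran_comp b c hbc]
    exact absurd (hrb ▸ ideal_ran_subset_of_isInvertible hb) hbr.2
  · rw [hac, ideal_comp_of_isInvertible hc hbc]

lemma exists_isInvertible_of_ideal_eq {a b : C.Mor} (h : C.Ideal b = C.Ideal a) :
    ∃ g, C.IsInvertible g ∧ C.src b = C.ran g ∧ a = C.comp b g := by
  obtain ⟨g, hbg, hag⟩ : a ∈ C.Ideal b := h ▸ mem_ideal_self a
  obtain ⟨g', hag', hbg'⟩ : b ∈ C.Ideal a := h.symm ▸ mem_ideal_self b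
  have hsg : C.src g = C.src a := by rw [hag, C.src_comp b g hbg]
  have hsg' : C.src g' = C.src b := by rw [hbg', C.src_comp a g' hag']
  have hgg' : C.src g = C.ran g' := hsg.trans hag'
  have hg'g : C.src g' = C.ran g := hsg'.trans hbg
  have hcomp : C.comp g g' = C.src b := by
    apply C.leftCancel b (C.comp g g') (C.src b)
      (hbg.trans (C.ran_comp g g' hgg').symm) (C.ran_src b).symm
    rw [← C.assoc b g g' hbg hgg', ← hag, ← hbg', C.comp_src]
  have hcomp' : C.comp g' g = C.src a := by
    apply C.leftCancel a (C.comp g' g) (C.src a)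
      (hag'.trans (C.ran_comp g' g hg'g).symm) (C.ran_src a).symm
    rw [← C.assoc a g' g hag' hg'g, ← hbg', ← hag, C.comp_src]
  exact ⟨g, ⟨g', hgg', hg'g, hbg ▸ hcomp, hsg ▸ hcomp'⟩, hbg, hag⟩

/-- `a ∈ B*Λ⁻¹`. -/
def HasRep (C : LCSC) (B : Set C.Mor) (a : C.Mor) : Prop :=
  ∃ β g, GenSubcat C B β ∧ C.IsInvertible g ∧ C.src β = C.ran g ∧ a = C.comp β g

variable {B : Set C.Mor}

lemma hasRep_of_isInvertible {a : C.Mor} (ha : C.IsInvertible a) : C.HasRep B a :=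
  ⟨C.ran a, a, .id _ (isId_ran a), ha, C.src_ran a, (C.id_comp a).symm⟩

lemma HasRep.genSubcat_comp {β a : C.Mor} (hβ : GenSubcat C B β) (ha : C.HasRep B a)
    (h : C.src β = C.ran a) : C.HasRep B (C.comp β a) := by
  obtain ⟨β', g, hβ', hg, hβ'g, rfl⟩ := ha
  have hββ' : C.src β = C.ran β' := h.trans (C.ran_comp β' g hβ'g)
  refine ⟨C.comp β β', g, .comp _ _ hβ hβ' hββ', hg, ?_, ?_⟩
  · rw [C.src_comp β β' hββ', hβ'g]
  · rw [C.assoc β β' g hββ' hβ'g]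

lemma CAtom.hasRep (hB : C.IsTransversal B) {a : C.Mor} (ha : C.CAtom a) : C.HasRep B a := by
  by_cases hinv : C.IsInvertible a
  · exact hasRep_of_isInvertible hinv
  obtain ⟨b, ⟨hbB, hba⟩, -⟩ := hB.2 a (ha.maxIdeal hinv)
  obtain ⟨g, hg, hbg, rfl⟩ := exists_isInvertible_of_ideal_eq hba
  exact ⟨b, g, .of b hbB, hg, hbg, rfl⟩

section LengthFunction

variable {M : Type} [Monoid M] {d : C.Mor → M}

lemma cAtom_of_mAtom (hd : C.MLenFn d) (h1 : C.LF1 d) {a : C.Mor} (ha : MAtom (d a)) :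
    C.CAtom a := by
  intro b c hbc habc
  rcases ha (d b) (d c) (by rw [habc, hd b c hbc]) with hb | hc
  · exact Or.inl ((h1 b).mp hb)
  · exact Or.inr ((h1 c).mp hc)

lemma hasRep_of_mem_closure (hd : C.MLenFn d) (h1 : C.LF1 d) (h2 : C.LF2 d)
    (hB : C.IsTransversal B) {m : M} (hm : m ∈ Submonoid.closure {e : M | MAtom e}) :
    ∀ a, d a = m → C.HasRep B a := by
  induction hm using Submonoid.closure_induction with
  | mem e he => exact fun a ha => (cAtom_of_mAtom hd h1 (ha ▸ he)).hasRep hB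
  | one => exact fun a ha => hasRep_of_isInvertible ((h1 a).mp ha)
  | mul x y _ _ ihx ihy =>
    intro a ha
    obtain ⟨a₁, a₂, h12, rfl, hd₁, hd₂⟩ := h2 a x y ha
    obtain ⟨β, g, hβ, hg, hβg, rfl⟩ := ihx a₁ hd₁
    have hga₂ : C.src g = C.ran a₂ := by rwa [C.src_comp β g hβg] at h12
    -- the invertible `g` has length `1`, so `g a₂` still has length `y`
    have hrep : C.HasRep B (C.comp g a₂) :=
      ihy _ (by rw [hd g a₂ hga₂, (h1 g).mpr hg, one_mul, hd₂])
    rw [C.assoc β g a₂ hβg hga₂]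
    exact hrep.genSubcat_comp hβ (hβg.trans (C.ran_comp g a₂ hga₂).symm)

end LengthFunction

lemma rep_unique (hR : RCondition C B) {β₁ β₂ g₁ g₂ : C.Mor}
    (hβ₁ : GenSubcat C B β₁) (hβ₂ : GenSubcat C B β₂)
    (hg₁ : C.IsInvertible g₁) (hg₂ : C.IsInvertible g₂)
    (hs₁ : C.src β₁ = C.ran g₁) (hs₂ : C.src β₂ = C.ran g₂)
    (heq : C.comp β₁ g₁ = C.comp β₂ g₂) : β₁ = β₂ ∧ g₁ = g₂ := by
  obtain ⟨h, hh1, hh2, hh3, hh4⟩ := hg₂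
  have hsg : C.src g₁ = C.ran h := by
    rw [← hh1, ← C.src_comp β₁ g₁ hs₁, heq, C.src_comp β₂ g₂ hs₂]
  have hβ₂eq : β₂ = C.comp β₁ (C.comp g₁ h) := by
    rw [← C.assoc β₁ g₁ h hs₁ hsg, heq, C.assoc β₂ g₂ h hs₂ hh1, hh3, ← hs₂, C.comp_src]
  have hinv : C.IsInvertible (C.comp g₁ h) :=
    hg₁.comp ⟨g₂, hh2, hh1, hh1 ▸ hh4, hh2 ▸ hh3⟩ hsg
  have hran : C.src β₁ = C.ran (C.comp g₁ h) := hs₁.trans (C.ran_comp g₁ h hsg).symm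
  have hid : C.IsId (C.comp g₁ h) := hR β₂ β₁ _ hβ₂ hβ₁ hinv hran hβ₂eq
  have hββ : β₁ = β₂ := by rw [hβ₂eq, ← hran.trans hid.2, C.comp_src]
  subst hββ
  exact ⟨rfl, C.leftCancel β₁ g₁ g₂ hs₁ hs₂ heq⟩

end LCSC

theorem lcsc_unique_representation_general (C : LCSC) {M : Type} [Monoid M]
    (hMa : AtomicMonoid M) (d : C.Mor → M)
    (hd : C.MLenFn d) (h1 : C.LF1 d) (h2 : C.LF2 d)
    (B : Set C.Mor) (hB : C.IsTransversal B) (hR : RCondition C B) :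
    (∀ a : C.Mor, ∃ β g, GenSubcat C B β ∧ C.IsInvertible g ∧
      C.src β = C.ran g ∧ a = C.comp β g) ∧
    (∀ β₁ β₂ g₁ g₂, GenSubcat C B β₁ → GenSubcat C B β₂ →
      C.IsInvertible g₁ → C.IsInvertible g₂ →
      C.src β₁ = C.ran g₁ → C.src β₂ = C.ran g₂ →
      C.comp β₁ g₁ = C.comp β₂ g₂ → β₁ = β₂ ∧ g₁ = g₂) :=
  ⟨fun a => LCSC.hasRep_of_mem_closure hd h1 h2 hB (hMa (d a)) a rfl,
    fun _ _ _ _ => LCSC.rep_unique hR⟩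

/-- Under (LF1), (LF2) into a conical atomic monoid, a
transversal `B` of generators of maximal proper principal right ideals, and
the R-condition, every morphism of `Λ` has a unique representation as an
element of `B*Λ⁻¹`. -/
theorem lcsc_unique_representation (C : LCSC) {M : Type} [Monoid M]
    (hM : Conical M) (hMa : AtomicMonoid M) (d : C.Mor → M)
    (hd : C.MLenFn d) (h1 : C.LF1 d) (h2 : C.LF2 d)
    (B : Set C.Mor) (hB : C.IsTransversal B) (hR : RCondition C B) :
    (∀ a : C.Mor, ∃ β g, GenSubcat C B β ∧ C.IsInvertible g ∧
      C.src β = C.ran g ∧ a = C.comp β g) ∧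
    (∀ β₁ β₂ g₁ g₂, GenSubcat C B β₁ → GenSubcat C B β₂ →
      C.IsInvertible g₁ → C.IsInvertible g₂ →
      C.src β₁ = C.ran g₁ → C.src β₂ = C.ran g₂ →
      C.comp β₁ g₁ = C.comp β₂ g₂ → β₁ = β₂ ∧ g₁ = g₂) :=
  lcsc_unique_representation_general C hMa d hd h1 h2 B hB hR
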